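/- In the Gaudin realization h(λ) = Σ_a (h_a/(λ-z_a) + ξ z_a X⁺_a), X⁻(λ) = Σ_a (X⁻_a/(λ-z_a) - (ξ/2)λ h_a), X⁺(λ) = Σ_a X⁺_a/(λ-z_a), the commutator [X⁺(λ), X⁻(μ)] = -(h(λ)-h(μ))/(λ-μ) + ξμX⁺(λ) holds for distinct λ, μ outside {z_1,…,z_N}. -/

import Mathlib

noncomputable section

/-- The current `h(λ) = Σ_a (h_a/(λ-z_a) + ξ z_a X⁺_a)`. -/
def hCur {A : Type*} [Ring A] [Algebra ℂ A] {N : ℕ} (z : Fin N → ℂ) (ξ : ℂ)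
    (H Xp : Fin N → A) (l : ℂ) : A :=
  ∑ a, ((l - z a)⁻¹ • H a + (ξ * z a) • Xp a)

/-- The current `X⁻(λ) = Σ_a (X⁻_a/(λ-z_a) - (ξ/2)λ h_a)`. -/
def XmCur {A : Type*} [Ring A] [Algebra ℂ A] {N : ℕ} (z : Fin N → ℂ) (ξ : ℂ)
    (H Xm : Fin N → A) (l : ℂ) : A :=
  ∑ a, ((l - z a)⁻¹ • Xm a - (ξ / 2 * l) • H a)

/-- The current `X⁺(λ) = Σ_a X⁺_a/(λ-z_a)`. -/
def XpCur {A : Type*} [Ring A] [Algebra ℂ A] {N : ℕ} (z : Fin N → ℂ)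
    (Xp : Fin N → A) (l : ℂ) : A :=
  ∑ a, (l - z a)⁻¹ • Xp a

/-- The λ-derivative `h'(λ) = -Σ_a h_a/(λ-z_a)²` of the current `h(λ)`. -/
def hdCur {A : Type*} [Ring A] [Algebra ℂ A] {N : ℕ} (z : Fin N → ℂ)
    (H : Fin N → A) (l : ℂ) : A :=
  ∑ a, (-((l - z a) ^ 2)⁻¹) • H a

/-- The generating function `t(λ) = h(λ)² - 2h'(λ) + 2(2X⁻(λ) + ξλ)X⁺(λ)`. -/
def tCur {A : Type*} [Ring A] [Algebra ℂ A] {N : ℕ} (z : Fin N → ℂ) (ξ : ℂ)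
    (H Xp Xm : Fin N → A) (l : ℂ) : A :=
  hCur z ξ H Xp l * hCur z ξ H Xp l - (2 : ℂ) • hdCur z H l +
    ((2 : ℂ) • ((2 : ℂ) • XmCur z ξ H Xm l + (ξ * l) • (1 : A))) * XpCur z Xp l

/-- The sl₂ relations at every site, and commutativity of generators at distinct sites. -/
def GaudinSites {A : Type*} [Ring A] [Algebra ℂ A] {N : ℕ}
    (H Xp Xm : Fin N → A) : Prop :=
  (∀ a, H a * Xp a - Xp a * H a = (2 : ℂ) • Xp a) ∧
  (∀ a, Xp a * Xm a - Xm a * Xp a = H a) ∧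
  (∀ a, H a * Xm a - Xm a * H a = (-2 : ℂ) • Xm a) ∧
  (∀ a b, a ≠ b → ∀ x ∈ ({H a, Xp a, Xm a} : Set A), ∀ y ∈ ({H b, Xp b, Xm b} : Set A),
    Commute x y)

/-- `[X⁺(λ), X⁻(μ)] = -(h(λ)-h(μ))/(λ-μ) + ξμX⁺(λ)`. -/
theorem XpCur_XmCur_comm {A : Type*} [Ring A] [Algebra ℂ A] {N : ℕ} (z : Fin N → ℂ) (ξ : ℂ)
    (H Xp Xm : Fin N → A) (hz : Function.Injective z) (hG : GaudinSites H Xp Xm)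
    (l m : ℂ) (hl : l ∉ Set.range z) (hm : m ∉ Set.range z) (hlm : l ≠ m) :
    XpCur z Xp l * XmCur z ξ H Xm m - XmCur z ξ H Xm m * XpCur z Xp l =
      (-(l - m)⁻¹) • (hCur z ξ H Xp l - hCur z ξ H Xp m) + (ξ * m) • XpCur z Xp l := by
  obtain ⟨h1, h2, _h3, h4⟩ := hG
  have hlz : ∀ a, l - z a ≠ 0 := fun a h => hl ⟨a, (sub_eq_zero.mp h).symm⟩
  have hmz : ∀ a, m - z a ≠ 0 := fun a h => hm ⟨a, (sub_eq_zero.mp h).symm⟩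
  have hlm' : l - m ≠ 0 := sub_ne_zero.mpr hlm
  set f : Fin N → ℂ := fun a => (l - z a)⁻¹ with hf
  set g : Fin N → ℂ := fun a => (m - z a)⁻¹ with hg
  have key : ∀ a b, (f a • Xp a) * (g b • Xm b - (ξ / 2 * m) • H b)
      - (g b • Xm b - (ξ / 2 * m) • H b) * (f a • Xp a)
      = if b = a then (f a * g a) • H a + (ξ * m * f a) • Xp a else 0 := by
    intro a b
    by_cases hab : b = a
    · subst hab
      rw [if_pos rfl]
      have e1 : Xp b * Xm b = H b + Xm b * Xp b := sub_eq_iff_eq_add.mp (h2 b)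
      have e2 : H b * Xp b = (2 : ℂ) • Xp b + Xp b * H b := sub_eq_iff_eq_add.mp (h1 b)
      simp only [mul_sub, sub_mul, smul_mul_assoc, mul_smul_comm, smul_smul]
      rw [e1, e2]
      simp only [smul_add, smul_smul]
      module
    · rw [if_neg hab]
      have hab' : a ≠ b := fun h => hab h.symm
      have c1 : Commute (Xp a) (Xm b) := h4 a b hab' (Xp a) (by simp) (Xm b) (by simp)
      have c2 : Commute (Xp a) (H b) := h4 a b hab' (Xp a) (by simp) (H b) (by simp)
      simp only [mul_sub, sub_mul, smul_mul_assoc, mul_smul_comm, smul_smul]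
      rw [c1.eq, c2.eq]
      module
  have expand : XpCur z Xp l * XmCur z ξ H Xm m - XmCur z ξ H Xm m * XpCur z Xp l
      = ∑ a, ∑ b, ((f a • Xp a) * (g b • Xm b - (ξ / 2 * m) • H b)
          - (g b • Xm b - (ξ / 2 * m) • H b) * (f a • Xp a)) := by
    rw [XpCur, XmCur, Finset.sum_mul_sum, Finset.sum_mul_sum, Finset.sum_comm (s := Finset.univ)
      (t := Finset.univ) (f := fun b a => (g b • Xm b - (ξ / 2 * m) • H b) * (f a • Xp a)),
      ← Finset.sum_sub_distrib]
    exact Finset.sum_congr rfl fun a _ => by rw [← Finset.sum_sub_distrib]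
  rw [expand]
  have step : ∀ a : Fin N, (∑ b, ((f a • Xp a) * (g b • Xm b - (ξ / 2 * m) • H b)
      - (g b • Xm b - (ξ / 2 * m) • H b) * (f a • Xp a)))
      = (f a * g a) • H a + (ξ * m * f a) • Xp a := by
    intro a
    rw [Finset.sum_congr rfl fun b _ => key a b]
    simp
  rw [Finset.sum_congr rfl fun a _ => step a]
  have hdiff : hCur z ξ H Xp l - hCur z ξ H Xp m = ∑ a, (f a - g a) • H a := by
    rw [hCur, hCur, ← Finset.sum_sub_distrib]
    exact Finset.sum_congr rfl fun a _ => by rw [sub_smul]; abel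
  rw [hdiff, XpCur, Finset.smul_sum, Finset.smul_sum, ← Finset.sum_add_distrib]
  refine Finset.sum_congr rfl fun a _ => ?_
  have hscal : -(l - m)⁻¹ * (f a - g a) = f a * g a := by
    show -(l - m)⁻¹ * ((l - z a)⁻¹ - (m - z a)⁻¹) = (l - z a)⁻¹ * (m - z a)⁻¹
    rw [inv_sub_inv (hlz a) (hmz a)]
    field_simp
    ring
  rw [smul_smul, smul_smul, hscal]

end
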